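/- Let A and B be vertex types each containing at least two elements, and let Γ be the disjoint union of the complete graph on A and the complete graph on B (so two distinct vertices of Γ are adjacent iff they both lie in A or both lie in B). Then Γ is rigid, but the core CΓ of Γ is not rigid (CΓ is the edgeless graph on two vertices). -/

import Mathlib

/-- `linkSet G S` is the link of a set `S` of vertices in the simple graph `G`:
the set of vertices adjacent to every vertex of `S`.  (For `S = ∅` this is all of `V`.) -/
def linkSet {V : Type*} (G : SimpleGraph V) (S : Set V) : Set V :=
  {w | ∀ v ∈ S, G.Adj v w}

/-- A simple graph is *rigid* if `Link(Link(v)) = {v}` for every vertex `v`. -/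
def IsRigid {V : Type*} (G : SimpleGraph V) : Prop :=
  ∀ v : V, linkSet G (linkSet G {v}) = {v}

/-- The *star* of a vertex `v` in a simple graph `G`: `{v} ∪ Link(v)`. -/
def starSet {V : Type*} (G : SimpleGraph V) (v : V) : Set V :=
  insert v (G.neighborSet v)

/-- The *core equivalence* on the vertices of a simple graph: `v ≈ w` iff
`Star(v) = Star(w)`. -/
def coreSetoid {V : Type*} (G : SimpleGraph V) : Setoid V where
  r v w := starSet G v = starSet G w
  iseqv := ⟨fun _ => rfl, Eq.symm, Eq.trans⟩

/-- The *core* of a simple graph `G`: the simple graph whose vertices are the core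
equivalence classes of `G`, with two distinct classes adjacent iff some (equivalently,
any) representatives are adjacent in `G`. -/
def coreGraph {V : Type*} (G : SimpleGraph V) :
    SimpleGraph (Quotient (coreSetoid G)) where
  Adj c d := c ≠ d ∧ ∃ v w : V,
    Quotient.mk (coreSetoid G) v = c ∧ Quotient.mk (coreSetoid G) w = d ∧ G.Adj v w
  symm := by
    refine ⟨?_⟩
    rintro c d ⟨hne, v, w, hv, hw, h⟩
    exact ⟨hne.symm, w, v, hw, hv, h.symm⟩
  loopless := ⟨fun c h => h.1 rfl⟩

/-- The disjoint union of the complete graph on `A` and the complete graph on `B`: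
two distinct vertices of `A ⊕ B` are adjacent iff they both lie in `A` or both lie
in `B`. -/
def twoCliques (A B : Type*) : SimpleGraph (A ⊕ B) where
  Adj x y := x ≠ y ∧ x.isLeft = y.isLeft
  symm := by
    refine ⟨?_⟩
    rintro x y ⟨h1, h2⟩
    exact ⟨h1.symm, h2.symm⟩
  loopless := ⟨fun x h => h.1 rfl⟩

/-!
In `twoCliques A B` the star of a vertex is its whole clique, so adjacent vertices are core
equivalent and the core has no edges, while the two cliques give two distinct core classes.
An edgeless graph on at least two vertices is not rigid: the link of a vertex is empty and the
link of the empty set is everything. The graph itself is rigid because for `v ≠ w` some neighbour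
of `v` misses `w`: `w` itself if `w` lies in the clique of `v`, any other vertex of that clique
otherwise.
-/

section Rigid

variable {V : Type*} (G : SimpleGraph V)

theorem mem_linkSet_linkSet_singleton {v w : V} :
    w ∈ linkSet G (linkSet G {v}) ↔ ∀ u, G.Adj v u → G.Adj u w := by
  simp [linkSet]

theorem isRigid_iff : IsRigid G ↔ ∀ v w, v ≠ w → ∃ u, G.Adj v u ∧ ¬G.Adj u w := by
  refine forall_congr' fun v => ?_
  simp only [Set.eq_singleton_iff_unique_mem, mem_linkSet_linkSet_singleton]
  rw [and_iff_right fun u h => h.symm]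
  refine forall_congr' fun w => ?_
  rw [ne_comm, ← not_imp_not]
  push Not
  rfl

theorem not_isRigid_bot [Nontrivial V] : ¬IsRigid (⊥ : SimpleGraph V) := by
  obtain ⟨v, w, hvw⟩ := exists_pair_ne V
  simpa [isRigid_iff] using ⟨v, w, hvw⟩

theorem coreGraph_eq_bot_iff :
    coreGraph G = ⊥ ↔ ∀ v w, G.Adj v w → starSet G v = starSet G w := by
  constructor
  · intro h v w hvw
    by_contra hne
    have hcore : (coreGraph G).Adj ⟦v⟧ ⟦w⟧ :=
      ⟨fun e => hne (Quotient.exact e), v, w, rfl, rfl, hvw⟩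
    simp [h] at hcore
  · intro h
    ext c d
    simp only [SimpleGraph.bot_adj, iff_false]
    rintro ⟨hne, v, w, rfl, rfl, hvw⟩
    exact hne (Quotient.sound (h v w hvw))

end Rigid

section TwoCliques

variable {A B : Type*}

theorem starSet_twoCliques (x : A ⊕ B) :
    starSet (twoCliques A B) x = {y | y.isLeft = x.isLeft} := by
  ext y
  by_cases hxy : y = x
  · simp [starSet, hxy]
  · simp [starSet, twoCliques, hxy, Ne.symm hxy, eq_comm]

theorem Sum.exists_ne_isLeft_eq [Nontrivial A] [Nontrivial B] (v : A ⊕ B) :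
    ∃ u, u ≠ v ∧ u.isLeft = v.isLeft := by
  cases v with
  | inl a =>
    obtain ⟨a', ha'⟩ := exists_ne a
    exact ⟨.inl a', by simpa using ha', rfl⟩
  | inr b =>
    obtain ⟨b', hb'⟩ := exists_ne b
    exact ⟨.inr b', by simpa using hb', rfl⟩

theorem isRigid_twoCliques [Nontrivial A] [Nontrivial B] : IsRigid (twoCliques A B) := by
  rw [isRigid_iff]
  intro v w hvw
  by_cases hside : v.isLeft = w.isLeft
  · exact ⟨w, ⟨hvw, hside⟩, (twoCliques A B).loopless.irrefl w⟩
  · obtain ⟨u, huv, hu⟩ := Sum.exists_ne_isLeft_eq v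
    exact ⟨u, ⟨huv.symm, hu.symm⟩, fun h => hside (hu.symm.trans h.2)⟩

theorem coreGraph_twoCliques : coreGraph (twoCliques A B) = ⊥ :=
  (coreGraph_eq_bot_iff _).2 fun v w h => by
    rw [starSet_twoCliques, starSet_twoCliques, h.2]

theorem nontrivial_quotient_coreSetoid_twoCliques [Nonempty A] [Nonempty B] :
    Nontrivial (Quotient (coreSetoid (twoCliques A B))) := by
  obtain ⟨a⟩ := ‹Nonempty A›
  obtain ⟨b⟩ := ‹Nonempty B›
  refine ⟨⟦.inl a⟧, ⟦.inr b⟧, fun h => ?_⟩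
  have hstar : starSet (twoCliques A B) (.inl a) = starSet (twoCliques A B) (.inr b) :=
    Quotient.exact h
  rw [starSet_twoCliques, starSet_twoCliques] at hstar
  simpa using hstar.le (show Sum.inl a ∈ {y : A ⊕ B | y.isLeft = true} from rfl)

theorem not_isRigid_coreGraph_twoCliques [Nonempty A] [Nonempty B] :
    ¬IsRigid (coreGraph (twoCliques A B)) := by
  have := nontrivial_quotient_coreSetoid_twoCliques (A := A) (B := B)
  rw [coreGraph_twoCliques]
  exact not_isRigid_bot

end TwoCliques

/-- **A rigid graph whose core is not rigid.**  If `A` and `B` each have at least two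
elements, then the disjoint union of the complete graphs on `A` and on `B` is rigid,
but its core is not rigid. -/
theorem isRigid_twoCliques_not_isRigid_coreGraph {A B : Type*}
    (hA : ∃ a b : A, a ≠ b) (hB : ∃ a b : B, a ≠ b) :
    IsRigid (twoCliques A B) ∧ ¬ IsRigid (coreGraph (twoCliques A B)) := by
  have := nontrivial_iff.2 hA
  have := nontrivial_iff.2 hB
  exact ⟨isRigid_twoCliques, not_isRigid_coreGraph_twoCliques⟩
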